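/- Let A be a length abelian category and M a monobrick in A. Then Filt(M) is a torsion-free class in A if and only if M is cofinally closed. Hence simp and Filt give mutually inverse bijections between torsion-free classes in A and cofinally closed monobricks in A. -/

import Mathlib

open CategoryTheory CategoryTheory.Limits

namespace MonobrickPaper

universe v u

variable {A : Type u} [Category.{v} A] [Abelian A]

/-- A set of objects closed under isomorphisms (models a set of iso-classes). -/
def IsoClosedSet (S : Set A) : Prop :=
  ∀ ⦃X Y : A⦄, (X ≅ Y) → X ∈ S → Y ∈ S

/-- A brick: an object whose endomorphism ring is a division ring, phrased as:
nonzero and every nonzero endomorphism is an isomorphism. -/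
def IsBrick (X : A) : Prop :=
  ¬ IsZero X ∧ ∀ f : X ⟶ X, f = 0 ∨ IsIso f

/-- A subcategory (set of objects) closed under extensions (containing the zero objects). -/
def ExtClosed (E : Set A) : Prop :=
  (∀ X : A, IsZero X → X ∈ E) ∧
  ∀ (S : ShortComplex A), S.ShortExact → S.X₁ ∈ E → S.X₃ ∈ E → S.X₂ ∈ E

/-- `M` is a simple object of `E`: nonzero, and admits no short exact sequence
`0 → L → M → N → 0` with `L, N` nonzero objects of `E`. -/
def SimpleIn (E : Set A) (M : A) : Prop :=
  ¬ IsZero M ∧ ∀ ⦃L N : A⦄ (i : L ⟶ M) (p : M ⟶ N) (w : i ≫ p = 0),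
    (ShortComplex.mk i p w).ShortExact → L ∈ E → N ∈ E → IsZero L ∨ IsZero N

/-- The set of simple objects of `E`. -/
def simpSet (E : Set A) : Set A := {X | X ∈ E ∧ SimpleIn E X}

/-- `M` is left Schurian for `E`: nonzero, and every morphism from `M` to an object
of `E` is zero or a monomorphism. -/
def LeftSchurianFor (E : Set A) (M : A) : Prop :=
  ¬ IsZero M ∧ ∀ ⦃X : A⦄, X ∈ E → ∀ f : M ⟶ X, f = 0 ∨ Mono f

/-- A monobrick: an iso-closed set of bricks such that every morphism between its
members is zero or a monomorphism. -/
def IsMonobrick (M : Set A) : Prop :=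
  IsoClosedSet M ∧ (∀ X ∈ M, IsBrick X) ∧
  ∀ ⦃X : A⦄, X ∈ M → ∀ ⦃Y : A⦄, Y ∈ M → ∀ f : X ⟶ Y, f = 0 ∨ Mono f

/-- A semibrick: an iso-closed set of bricks such that every morphism between its
members is zero or an isomorphism. -/
def IsSemibrick (S : Set A) : Prop :=
  IsoClosedSet S ∧ (∀ X ∈ S, IsBrick X) ∧
  ∀ ⦃X : A⦄, X ∈ S → ∀ ⦃Y : A⦄, Y ∈ S → ∀ f : X ⟶ Y, f = 0 ∨ IsIso f

/-- Membership in the extension closure `Filt C`: objects admitting a finite filtration with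
subquotients in `C`, generated by objects isomorphic to members of `C`, zero objects, and
extensions. -/
inductive FiltMem (C : Set A) : A → Prop
  | of_iso {X Y : A} (h : Y ∈ C) (e : X ≅ Y) : FiltMem C X
  | of_isZero {X : A} (h : IsZero X) : FiltMem C X
  | of_extension {S : ShortComplex A} (hS : S.ShortExact)
      (h1 : FiltMem C S.X₁) (h3 : FiltMem C S.X₃) : FiltMem C S.X₂

/-- The extension closure of `C`. -/
def Filt (C : Set A) : Set A := {X | FiltMem C X}

/-- A left Schur subcategory: extension-closed (and iso-closed), and every simple object
is left Schurian. -/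
def IsLeftSchur (E : Set A) : Prop :=
  IsoClosedSet E ∧ ExtClosed E ∧ ∀ M ∈ E, SimpleIn E M → LeftSchurianFor E M

/-- A torsion-free class: closed under extensions and subobjects. -/
def IsTorsionFreeClass (F : Set A) : Prop :=
  IsoClosedSet F ∧ ExtClosed F ∧
  ∀ ⦃X Y : A⦄ (f : X ⟶ Y), Mono f → Y ∈ F → X ∈ F

/-- A wide subcategory: closed under extensions, kernels and cokernels. -/
def IsWide (W : Set A) : Prop :=
  IsoClosedSet W ∧ ExtClosed W ∧
  (∀ ⦃X Y : A⦄ (f : X ⟶ Y), X ∈ W → Y ∈ W → kernel f ∈ W) ∧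
  (∀ ⦃X Y : A⦄ (f : X ⟶ Y), X ∈ W → Y ∈ W → cokernel f ∈ W)

/-- The submodule order: `X ≤ Y` iff there is a monomorphism `X ↪ Y`. -/
def subOrder (X Y : A) : Prop := ∃ f : X ⟶ Y, Mono f

/-- The set of maximal elements of `M` with respect to the submodule order
(maximality up to isomorphism of iso-classes). -/
def maxSet (M : Set A) : Set A :=
  {X | X ∈ M ∧ ∀ Y ∈ M, subOrder X Y → subOrder Y X}

/-- `N` is a cofinal extension of the monobrick `M`. -/
def IsCofinalExt (M N : Set A) : Prop :=
  IsMonobrick N ∧ M ⊆ N ∧ ∀ X ∈ N, ∃ Y ∈ M, subOrder X Y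

/-- A cofinally closed monobrick: no cofinal extension other than itself. -/
def IsCofinallyClosed (M : Set A) : Prop :=
  IsMonobrick M ∧ ∀ N : Set A, IsCofinalExt M N → N = M

/-- The cofinal closure of `M`: the union of all cofinal extensions of `M`. -/
def cofClosure (M : Set A) : Set A :=
  {X | ∃ N : Set A, IsCofinalExt M N ∧ X ∈ N}

/-- All subobjects of objects of `C`. -/
def subClosure (C : Set A) : Set A := {X | ∃ Y ∈ C, subOrder X Y}


/-! ### Auxiliary lemmas -/

section Aux

lemma shortExact_mono_cokernel {X Y : A} (f : X ⟶ Y) [Mono f] :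
    (ShortComplex.mk f (cokernel.π f) (cokernel.condition f)).ShortExact :=
  ShortComplex.ShortExact.mk'
    (ShortComplex.exact_of_g_is_cokernel _ (cokernelIsCokernel f))
    inferInstance inferInstance

lemma shortExact_ofIso {S : ShortComplex A} (hS : S.ShortExact) {L X N : A}
    (e1 : S.X₁ ≅ L) (e2 : S.X₂ ≅ X) (e3 : S.X₃ ≅ N) (f : L ⟶ X) (g : X ⟶ N)
    (hf : e1.hom ≫ f = S.f ≫ e2.hom) (hg : e2.hom ≫ g = S.g ≫ e3.hom) (w : f ≫ g = 0) :
    (ShortComplex.mk f g w).ShortExact :=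
  ShortComplex.shortExact_of_iso (ShortComplex.isoMk e1 e2 e3 hf hg) hS

lemma SimpleIn.of_iso {E : Set A} {X Y : A} (h : SimpleIn E X) (e : X ≅ Y) :
    SimpleIn E Y := by
  refine ⟨fun hz => h.1 (hz.of_iso e), ?_⟩
  intro L N i p w hS hL hN
  refine h.2 (i ≫ e.inv) (e.hom ≫ p) (by simp [w]) ?_ hL hN
  exact shortExact_ofIso hS (Iso.refl _) e.symm (Iso.refl _) _ _ (by simp) (by simp)
    (by simp [w])

lemma FiltMem.of_mem {C : Set A} {X : A} (h : X ∈ C) : FiltMem C X :=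
  .of_iso h (Iso.refl X)

lemma FiltMem.iso {C : Set A} {X Y : A} (h : FiltMem C Y) (e : X ≅ Y) : FiltMem C X := by
  cases h with
  | of_iso h e' => exact .of_iso h (e ≪≫ e')
  | of_isZero h => exact .of_isZero (h.of_iso e)
  | @of_extension S hS h1 h3 =>
    exact .of_extension (S := ShortComplex.mk (S.f ≫ e.inv) (e.hom ≫ S.g)
        (by simp [S.zero]))
      (shortExact_ofIso hS (Iso.refl _) e.symm (Iso.refl _) _ _ (by simp) (by simp)
        (by simp [S.zero])) h1 h3

lemma FiltMem.mono_set {C D : Set A} (h : C ⊆ D) {X : A} (hX : FiltMem C X) :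
    FiltMem D X := by
  induction hX with
  | of_iso hm e => exact .of_iso (h hm) e
  | of_isZero hz => exact .of_isZero hz
  | of_extension hS h1 h3 ih1 ih3 => exact .of_extension hS ih1 ih3

lemma filt_subset_closed {E : Set A} (hiso : IsoClosedSet E) (hext : ExtClosed E)
    {C : Set A} (hC : C ⊆ E) : Filt C ⊆ E := by
  intro X h
  induction h with
  | of_iso hm e => exact hiso e.symm (hC hm)
  | of_isZero hz => exact hext.1 _ hz
  | of_extension hS h1 h3 ih1 ih3 => exact hext.2 _ hS ih1 ih3

/-- Every nonzero object of `Filt C` admits an epimorphism onto a nonzero member of `C`. -/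
lemma exists_epi_to_member {C : Set A} {X : A} (h : FiltMem C X) (hX : ¬ IsZero X) :
    ∃ Y, Y ∈ C ∧ ¬ IsZero Y ∧ ∃ g : X ⟶ Y, Epi g := by
  induction h with
  | @of_iso X Y hm e =>
    exact ⟨Y, hm, fun hz => hX (hz.of_iso e), e.hom, inferInstance⟩
  | of_isZero hz => exact absurd hz hX
  | @of_extension S hS h1 h3 ih1 ih3 =>
    by_cases hz3 : IsZero S.X₃
    · have hg0 : S.g = 0 := hz3.eq_zero_of_tgt _
      have hepi : Epi S.f := hS.exact.epi_f hg0
      haveI := hS.mono_f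
      haveI := hepi
      haveI : IsIso S.f := isIso_of_mono_of_epi _
      obtain ⟨Y, hY, hYz, g, hg⟩ := ih1 (fun h1z => hX (h1z.of_iso (asIso S.f).symm))
      exact ⟨Y, hY, hYz, inv S.f ≫ g, epi_comp _ _⟩
    · obtain ⟨Y, hY, hYz, g, hg⟩ := ih3 hz3
      haveI := hS.epi_g
      exact ⟨Y, hY, hYz, S.g ≫ g, epi_comp _ _⟩

lemma mk_lt_mk_of_nonEpi {X Y Z : A} (c : Y ⟶ X) [Mono c] (f : Z ⟶ Y) [Mono f]
    (hf : ¬ Epi f) : Subobject.mk (f ≫ c) < Subobject.mk c := by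
  refine lt_of_le_of_ne (Subobject.mk_le_mk_of_comm f rfl) (fun h => hf ?_)
  have h1 : Subobject.mk c ≤ Subobject.mk (f ≫ c) := le_of_eq h.symm
  have hw : Subobject.ofMkLEMk _ _ h1 ≫ (f ≫ c) = c := Subobject.ofMkLEMk_comp h1
  rw [← Category.assoc] at hw
  have hsplit : (Subobject.ofMkLEMk _ _ h1 ≫ f) ≫ c = 𝟙 Y ≫ c := by
    rw [hw, Category.id_comp]
  have hsplit' : Subobject.ofMkLEMk _ _ h1 ≫ f = 𝟙 Y := (cancel_mono c).1 hsplit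
  exact ⟨fun g h hgh => by
    rw [← Category.id_comp g, ← hsplit', Category.assoc, hgh, ← Category.assoc, hsplit',
      Category.id_comp]⟩

private def pow {X : A} (f : X ⟶ X) : ℕ → (X ⟶ X)
  | 0 => 𝟙 X
  | n+1 => f ≫ pow f n

lemma pow_mono {X : A} (f : X ⟶ X) [Mono f] : ∀ n, Mono (pow f n)
  | 0 => inferInstanceAs (Mono (𝟙 X))
  | n+1 => by
    haveI := pow_mono f n
    exact @mono_comp A _ X X X f ‹_› (pow f n) ‹_›

/-- A mono endomorphism of an artinian object is an isomorphism. -/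
lemma isIso_of_mono_endo {X : A} [IsArtinianObject X] (f : X ⟶ X) [Mono f] : IsIso f := by
  haveI : ∀ n, Mono (pow f n) := fun n => pow_mono f n
  have key : ∃ n, Subobject.mk (pow f (n+1)) = Subobject.mk (pow f n) := by
    by_contra hc
    push_neg at hc
    have hlt : ∀ n, Subobject.mk (pow f (n+1)) < Subobject.mk (pow f n) := fun n =>
      lt_of_le_of_ne (Subobject.mk_le_mk_of_comm f rfl) (hc n)
    obtain ⟨a, ⟨n, rfl⟩, hmin⟩ := (wellFounded_lt (α := Subobject X)).has_min
      (Set.range (fun n => Subobject.mk (pow f n))) ⟨_, ⟨0, rfl⟩⟩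
    exact hmin _ ⟨n+1, rfl⟩ (hlt n)
  obtain ⟨n, heq⟩ := key
  have h1 : Subobject.mk (pow f n) ≤ Subobject.mk (pow f (n+1)) := le_of_eq heq.symm
  have hw : Subobject.ofMkLEMk _ _ h1 ≫ pow f (n+1) = pow f n := Subobject.ofMkLEMk_comp h1
  set w := Subobject.ofMkLEMk (pow f n) (pow f (n+1)) h1 with hwdef
  have hpn1 : pow f (n+1) = f ≫ pow f n := rfl
  have hwf : w ≫ f = 𝟙 X := by
    have h2 : (w ≫ f) ≫ pow f n = 𝟙 X ≫ pow f n := by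
      rw [Category.assoc, ← hpn1, hw, Category.id_comp]
    exact (cancel_mono (pow f n)).1 h2
  have hfw : f ≫ w = 𝟙 X := by
    have h2 : (f ≫ w) ≫ f = 𝟙 X ≫ f := by
      rw [Category.assoc, hwf, Category.comp_id, Category.id_comp]
    exact (cancel_mono f).1 h2
  exact ⟨w, hfw, hwf⟩

/-- The strict subobject relation: `Y` admits a non-epi mono into `X`. -/
def SubRel (Y X : A) : Prop := ∃ f : Y ⟶ X, Mono f ∧ ¬ Epi f

lemma subRel_wf [∀ X : A, IsArtinianObject X] : WellFounded (SubRel (A := A)) := by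
  haveI : IsTrans A SubRel := ⟨fun a b c ⟨f, hf, hfe⟩ ⟨g, hg, hge⟩ =>
    ⟨f ≫ g, @mono_comp _ _ _ _ _ f hf g hg, fun h => hge (@epi_of_epi _ _ _ _ _ f g h)⟩⟩
  haveI : IsIrrefl A SubRel := ⟨fun a ⟨f, hf, hfe⟩ => by
    haveI := hf
    haveI : IsIso f := isIso_of_mono_endo f
    exact hfe inferInstance⟩
  haveI : IsStrictOrder A SubRel := ⟨⟩
  rw [RelEmbedding.wellFounded_iff_isEmpty]
  constructor
  intro emb
  have step : ∀ n : ℕ, SubRel (emb (n+1)) (emb n) := fun n =>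
    emb.map_rel_iff.2 (Nat.lt_succ_self n)
  choose f hfm hfe using step
  haveI := fun n => hfm n
  let c : ∀ n : ℕ, (emb n ⟶ emb 0) := fun n => Nat.rec (𝟙 (emb 0)) (fun n g => f n ≫ g) n
  have hc : ∀ n, Mono (c n) := by
    intro n
    induction n with
    | zero => exact inferInstanceAs (Mono (𝟙 _))
    | succ n ih => exact @mono_comp A _ _ _ _ (f n) (hfm n) (c n) ih
  let q : ℕ → Subobject (emb 0) := fun n => @Subobject.mk _ _ _ _ (c n) (hc n)
  have hlt : ∀ n, q (n+1) < q n := fun n =>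
    @mk_lt_mk_of_nonEpi A _ _ _ _ _ (c n) (hc n) (f n) (hfm n) (hfe n)
  obtain ⟨a, ⟨n, rfl⟩, hmin⟩ := (wellFounded_lt (α := Subobject (emb 0))).has_min
    (Set.range q) ⟨_, ⟨0, rfl⟩⟩
  exact hmin _ ⟨n+1, rfl⟩ (hlt n)

lemma mono_factorThruCoimage {X Y : A} (f : X ⟶ Y) :
    Mono (Abelian.factorThruCoimage f) := by
  have h : Abelian.factorThruCoimage f =
      Abelian.coimageImageComparison f ≫ Abelian.image.ι f :=
    (cancel_epi (Abelian.coimage.π f)).1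
      (by rw [Abelian.coimage.fac, Abelian.coimage_image_factorisation])
  rw [h]
  exact mono_comp _ _

/-- Key lemma: every object of a torsion-free class is filtered by its simple objects. -/
lemma mem_filtSimp [∀ X : A, IsNoetherianObject X] [∀ X : A, IsArtinianObject X]
    {F : Set A} (hF : IsTorsionFreeClass F) {X : A} (hX : X ∈ F) :
    X ∈ Filt (simpSet F) := by
  obtain ⟨hiso, hext, hsub⟩ := hF
  revert hX
  refine subRel_wf.induction (C := fun X => X ∈ F → X ∈ Filt (simpSet F)) X ?_
  clear X
  intro X ih hXF
  by_cases hz : IsZero X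
  · exact FiltMem.of_isZero hz
  by_cases hsimp : SimpleIn F X
  · exact FiltMem.of_mem ⟨hXF, hsimp⟩
  have hexists : ¬ ∀ (L N : A) (i : L ⟶ X) (p : X ⟶ N) (w : i ≫ p = 0),
      (ShortComplex.mk i p w).ShortExact → L ∈ F → N ∈ F → IsZero L ∨ IsZero N :=
    fun h => hsimp ⟨hz, fun L N i p w hS hL hN => h L N i p w hS hL hN⟩
  push_neg at hexists
  obtain ⟨L, N, i, p, w, hS, hL, hN, hLz, hNz⟩ := hexists
  haveI := hS.mono_f
  set U : Set (Subobject X) :=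
    {u | cokernel u.arrow ∈ F ∧ ¬ IsZero (cokernel u.arrow)} with hU
  have hU0 : Subobject.mk i ∈ U := by
    have e1 : cokernel (Subobject.mk i).arrow ≅ cokernel i :=
      cokernel.mapIso (Subobject.mk i).arrow i (Subobject.underlyingIso i) (Iso.refl X)
        (by simp)
    have e2 : cokernel i ≅ N :=
      IsColimit.coconePointUniqueUpToIso (cokernelIsCokernel i) hS.gIsCokernel
    exact ⟨hiso (e1 ≪≫ e2).symm hN, fun hzc => hNz (hzc.of_iso (e1 ≪≫ e2).symm)⟩
  obtain ⟨u, hu, hmin⟩ :=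
    (wellFounded_gt (α := Subobject X)).has_min U ⟨_, hU0⟩
  obtain ⟨huF, huZ⟩ := hu
  have hSES := shortExact_mono_cokernel u.arrow
  have hsimp0 : SimpleIn F (cokernel u.arrow) := by
    refine ⟨huZ, ?_⟩
    intro L' N'' i' p'' w' hS' hL' hN''
    by_cases hN''z : IsZero N''
    · exact Or.inr hN''z
    left
    haveI := hS'.epi_g
    haveI : Epi (cokernel.π u.arrow ≫ p'') := epi_comp _ _
    have hq0 : u.arrow ≫ cokernel.π u.arrow ≫ p'' = 0 := by
      rw [← Category.assoc, cokernel.condition, zero_comp]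
    have hle : u ≤ Subobject.mk (kernel.ι (cokernel.π u.arrow ≫ p'')) := by
      conv_lhs => rw [← Subobject.mk_arrow u]
      exact Subobject.mk_le_mk_of_comm (kernel.lift _ u.arrow hq0) (kernel.lift_ι _ _ _)
    have heq : Subobject.mk (kernel.ι (cokernel.π u.arrow ≫ p'')) = u := by
      by_contra hne
      have e1 : cokernel (Subobject.mk (kernel.ι (cokernel.π u.arrow ≫ p''))).arrow ≅
          cokernel (kernel.ι (cokernel.π u.arrow ≫ p'')) :=
        cokernel.mapIso _ _ (Subobject.underlyingIso _) (Iso.refl X) (by simp)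
      haveI : Epi (Abelian.factorThruCoimage (cokernel.π u.arrow ≫ p'')) :=
        epi_of_epi_fac (Abelian.coimage.fac _)
      haveI := mono_factorThruCoimage (cokernel.π u.arrow ≫ p'')
      haveI : IsIso (Abelian.factorThruCoimage (cokernel.π u.arrow ≫ p'')) :=
        isIso_of_mono_of_epi _
      have e2 : cokernel (kernel.ι (cokernel.π u.arrow ≫ p'')) ≅ N'' :=
        asIso (Abelian.factorThruCoimage (cokernel.π u.arrow ≫ p''))
      exact hmin _ ⟨hiso (e1 ≪≫ e2).symm hN'',
          fun hzc => hN''z (hzc.of_iso (e1 ≪≫ e2).symm)⟩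
        (lt_of_le_of_ne hle (Ne.symm hne))
    have h1 : Subobject.mk (kernel.ι (cokernel.π u.arrow ≫ p'')) ≤ Subobject.mk u.arrow := by
      rw [Subobject.mk_arrow]
      exact le_of_eq heq
    have hw0 : Subobject.ofMkLEMk _ _ h1 ≫ u.arrow =
        kernel.ι (cokernel.π u.arrow ≫ p'') := Subobject.ofMkLEMk_comp h1
    have hkq : kernel.ι (cokernel.π u.arrow ≫ p'') ≫ cokernel.π u.arrow = 0 := by
      rw [← hw0, Category.assoc, cokernel.condition, comp_zero]
    have h2 : pullback.fst (cokernel.π u.arrow) (kernel.ι p'') ≫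
        (cokernel.π u.arrow ≫ p'') = 0 := by
      rw [← Category.assoc, pullback.condition, Category.assoc, kernel.condition, comp_zero]
    have h4 : kernel.lift _ _ h2 ≫ kernel.ι (cokernel.π u.arrow ≫ p'') =
        pullback.fst (cokernel.π u.arrow) (kernel.ι p'') := kernel.lift_ι _ _ _
    have h5 : pullback.snd (cokernel.π u.arrow) (kernel.ι p'') ≫ kernel.ι p'' = 0 := by
      rw [← pullback.condition, ← h4, Category.assoc, hkq, comp_zero]
    have h6 : kernel.ι p'' = 0 :=
      (cancel_epi (pullback.snd (cokernel.π u.arrow) (kernel.ι p''))).1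
        (by rw [h5, comp_zero])
    have h7 : IsZero (kernel p'') := IsZero.of_mono_eq_zero _ h6
    exact h7.of_iso (IsLimit.conePointUniqueUpToIso hS'.fIsKernel
      (limit.isLimit (parallelPair p'' 0)))
  have hu_rel : SubRel (u : A) X := by
    refine ⟨u.arrow, inferInstance, fun hepi => huZ ?_⟩
    haveI := hepi
    have hπ : cokernel.π u.arrow = 0 :=
      (cancel_epi u.arrow).1 (by rw [cokernel.condition, comp_zero])
    exact IsZero.of_epi_eq_zero _ hπ
  have huFilt : (u : A) ∈ Filt (simpSet F) := ih _ hu_rel (hsub u.arrow inferInstance hXF)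
  exact FiltMem.of_extension hSES huFilt (FiltMem.of_mem ⟨huF, hsimp0⟩)

/-- In a torsion-free class, a nonzero map from a simple object is a mono. -/
lemma simple_map_mono {F : Set A} (hF : IsTorsionFreeClass F) {S : A}
    (hS : S ∈ simpSet F) {X : A} (hX : X ∈ F) (f : S ⟶ X) (hf : f ≠ 0) : Mono f := by
  obtain ⟨hiso, hext, hsub⟩ := hF
  obtain ⟨hSF, hSs⟩ := hS
  have hses := shortExact_mono_cokernel (kernel.ι f)
  have hker : kernel f ∈ F := hsub (kernel.ι f) inferInstance hSF
  haveI := mono_factorThruCoimage f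
  have hcoim : Abelian.coimage f ∈ F := hsub (Abelian.factorThruCoimage f) inferInstance hX
  rcases hSs.2 _ _ _ hses hker hcoim with hz | hz
  · have h0 : kernel.ι f = 0 := hz.eq_zero_of_src _
    exact Abelian.mono_of_kernel_ι_eq_zero f h0
  · exfalso
    apply hf
    have h0 : Abelian.factorThruCoimage f = 0 := hz.eq_zero_of_src _
    rw [← Abelian.coimage.fac f, h0, comp_zero]

lemma simpSet_monobrick [∀ X : A, IsArtinianObject X] {F : Set A}
    (hF : IsTorsionFreeClass F) : IsMonobrick (simpSet F) := by
  refine ⟨?_, ?_, ?_⟩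
  · intro X Y e hX
    exact ⟨hF.1 e hX.1, hX.2.of_iso e⟩
  · intro X hX
    refine ⟨hX.2.1, ?_⟩
    intro f
    by_cases hf : f = 0
    · exact Or.inl hf
    · haveI := simple_map_mono hF hX hX.1 f hf
      exact Or.inr (isIso_of_mono_endo f)
  · intro X hX Y hY f
    by_cases hf : f = 0
    · exact Or.inl hf
    · exact Or.inr (simple_map_mono hF hX hY.1 f hf)

/-- Members of a monobrick are simple in its extension closure. -/
lemma mem_simpSet_filt {M : Set A} (hM : IsMonobrick M) {Mi : A} (hMi : Mi ∈ M) :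
    Mi ∈ simpSet (Filt M) := by
  refine ⟨FiltMem.of_mem hMi, (hM.2.1 Mi hMi).1, ?_⟩
  intro L Q i p w hS hL hQ
  by_contra hcon
  obtain ⟨hLz, hQz⟩ := not_or.mp hcon
  obtain ⟨Y, hY, hYz, g, hg⟩ := exists_epi_to_member hQ hQz
  haveI := hS.epi_g
  haveI := hg
  haveI : Epi (p ≫ g) := epi_comp _ _
  have hc0 : p ≫ g ≠ 0 := fun h => hYz (IsZero.of_epi_eq_zero _ h)
  rcases hM.2.2 hMi hY (p ≫ g) with h0 | hmono
  · exact hc0 h0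
  · haveI := hmono
    haveI : IsIso (p ≫ g) := isIso_of_mono_of_epi _
    apply hLz
    haveI := hS.mono_f
    refine IsZero.of_mono_eq_zero i ?_
    have hi : i ≫ (p ≫ g) = 0 := by rw [← Category.assoc, w, zero_comp]
    calc i = (i ≫ (p ≫ g)) ≫ inv (p ≫ g) := by
            rw [Category.assoc, IsIso.hom_inv_id, Category.comp_id]
    _ = 0 := by rw [hi, zero_comp]

/-- Simple objects of the extension closure of a monobrick belong to the monobrick. -/
lemma filt_simple_mem {M : Set A} (hM : IsMonobrick M) {X : A} (hX : FiltMem M X)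
    (hs : SimpleIn (Filt M) X) : X ∈ M := by
  induction hX with
  | of_iso h e => exact hM.1 e.symm h
  | of_isZero h => exact absurd h hs.1
  | @of_extension S hS h1 h3 ih1 ih3 =>
    rcases hs.2 S.f S.g S.zero hS h1 h3 with hz1 | hz3
    · have hf0 : S.f = 0 := hz1.eq_zero_of_src _
      haveI : Mono S.g := hS.exact.mono_g hf0
      haveI := hS.epi_g
      haveI : IsIso S.g := isIso_of_mono_of_epi _
      exact hM.1 (asIso S.g).symm (ih3 (hs.of_iso (asIso S.g)))
    · have hg0 : S.g = 0 := hz3.eq_zero_of_tgt _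
      haveI : Epi S.f := hS.exact.epi_f hg0
      haveI := hS.mono_f
      haveI : IsIso S.f := isIso_of_mono_of_epi _
      exact hM.1 (asIso S.f) (ih1 (hs.of_iso (asIso S.f).symm))

lemma simpSet_filt_eq {M : Set A} (hM : IsMonobrick M) : simpSet (Filt M) = M :=
  Set.eq_of_subset_of_subset (fun _ h => filt_simple_mem hM h.1 h.2)
    (fun _ h => mem_simpSet_filt hM h)

/-- The simple objects of a torsion-free class form a cofinally closed monobrick. -/
lemma simpSet_cofClosed [∀ X : A, IsNoetherianObject X] [∀ X : A, IsArtinianObject X]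
    {F : Set A} (hF : IsTorsionFreeClass F) : IsCofinallyClosed (simpSet F) := by
  refine ⟨simpSet_monobrick hF, ?_⟩
  rintro N ⟨hNmono, hMN, hcof⟩
  refine Set.eq_of_subset_of_subset ?_ hMN
  intro X hXN
  have hXz : ¬ IsZero X := (hNmono.2.1 X hXN).1
  obtain ⟨Y, hY, m, hm⟩ := hcof X hXN
  have hXF : X ∈ F := hF.2.2 m hm hY.1
  refine ⟨hXF, hXz, ?_⟩
  intro L Q i p w hS hL hQ
  by_contra hcon
  obtain ⟨hLz, hQz⟩ := not_or.mp hcon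
  have hQfilt : Q ∈ Filt (simpSet F) := mem_filtSimp hF hQ
  obtain ⟨Y', hY', hY'z, g, hg⟩ := exists_epi_to_member hQfilt hQz
  haveI := hS.epi_g
  haveI := hg
  haveI : Epi (p ≫ g) := epi_comp _ _
  have hc0 : p ≫ g ≠ 0 := fun h => hY'z (IsZero.of_epi_eq_zero _ h)
  rcases hNmono.2.2 hXN (hMN hY') (p ≫ g) with h0 | hmono
  · exact hc0 h0
  · haveI := hmono
    haveI : IsIso (p ≫ g) := isIso_of_mono_of_epi _
    apply hLz
    haveI := hS.mono_f
    refine IsZero.of_mono_eq_zero i ?_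
    have hi : i ≫ (p ≫ g) = 0 := by rw [← Category.assoc, w, zero_comp]
    calc i = (i ≫ (p ≫ g)) ≫ inv (p ≫ g) := by
            rw [Category.assoc, IsIso.hom_inv_id, Category.comp_id]
    _ = 0 := by rw [hi, zero_comp]

/-! ### The smallest torsion-free class containing a monobrick -/

def chainC (M : Set A) : ℕ → Set A
  | 0 => M
  | n+1 => subClosure (Filt (chainC M n))

def TT (M : Set A) : Set A := ⋃ n, chainC M n

lemma chainC_le_succ {M : Set A} {n : ℕ} : chainC M n ⊆ chainC M (n+1) :=
  fun X hX => ⟨X, FiltMem.of_mem hX, 𝟙 X, inferInstance⟩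

lemma chainC_mono {M : Set A} {m n : ℕ} (h : m ≤ n) : chainC M m ⊆ chainC M n := by
  induction h with
  | refl => exact fun _ h => h
  | step _ ih => exact Set.Subset.trans ih chainC_le_succ

lemma TT_torsionFree {M : Set A} : IsTorsionFreeClass (TT M) := by
  refine ⟨?_, ⟨?_, ?_⟩, ?_⟩
  · intro X Y e hX
    obtain ⟨n, hn⟩ := Set.mem_iUnion.1 hX
    exact Set.mem_iUnion.2 ⟨n+1, X, FiltMem.of_mem hn, e.inv, inferInstance⟩
  · intro X hz
    exact Set.mem_iUnion.2 ⟨1, X, FiltMem.of_isZero hz, 𝟙 X, inferInstance⟩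
  · intro S hS h1 h3
    obtain ⟨m, hm⟩ := Set.mem_iUnion.1 h1
    obtain ⟨n, hn⟩ := Set.mem_iUnion.1 h3
    refine Set.mem_iUnion.2 ⟨max m n + 1, S.X₂, ?_, 𝟙 _, inferInstance⟩
    exact FiltMem.of_extension hS (FiltMem.of_mem (chainC_mono (le_max_left m n) hm))
      (FiltMem.of_mem (chainC_mono (le_max_right m n) hn))
  · intro X Y f hf hY
    obtain ⟨n, hn⟩ := Set.mem_iUnion.1 hY
    exact Set.mem_iUnion.2 ⟨n+1, Y, FiltMem.of_mem hn, f, hf⟩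

lemma claimC {M : Set A} (hM : IsMonobrick M) :
    ∀ n, ∀ X ∈ chainC M n, ∀ Mi ∈ M, ∀ f : Mi ⟶ X, f ≠ 0 → Mono f := by
  intro n
  induction n with
  | zero => intro X hX Mi hMi f hf; exact (hM.2.2 hMi hX f).resolve_left hf
  | succ n ih =>
    have inner : ∀ Z : A, FiltMem (chainC M n) Z →
        ∀ Mi ∈ M, ∀ h : Mi ⟶ Z, h ≠ 0 → Mono h := by
      intro Z hZ
      induction hZ with
      | @of_iso Z C hmem e =>
        intro Mi hMi h hh
        have h0 : h ≫ e.hom ≠ 0 := fun hc => hh (by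
          have h2 := congrArg (fun t => t ≫ e.inv) hc
          simpa using h2)
        haveI := ih C hmem Mi hMi (h ≫ e.hom) h0
        exact mono_of_mono h e.hom
      | of_isZero hz => intro Mi hMi h hh; exact absurd (hz.eq_zero_of_tgt h) hh
      | @of_extension S hS h1 h3 ih1 ih3 =>
        intro Mi hMi h hh
        by_cases hg : h ≫ S.g = 0
        · obtain ⟨l, hl⟩ := KernelFork.IsLimit.lift' hS.fIsKernel h hg
          have hl' : l ≫ S.f = h := hl
          have hl0 : l ≠ 0 := fun h0 => hh (by rw [← hl', h0, zero_comp])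
          haveI := ih1 Mi hMi l hl0
          haveI := hS.mono_f
          rw [← hl']
          exact mono_comp _ _
        · haveI := ih3 Mi hMi (h ≫ S.g) hg
          exact mono_of_mono h S.g
    intro X hX Mi hMi f hf
    obtain ⟨Z, hZ, m, hm⟩ := hX
    haveI := hm
    have h0 : f ≫ m ≠ 0 := fun hc => hf ((cancel_mono m).1 (by rw [hc, zero_comp]))
    haveI := inner Z hZ Mi hMi (f ≫ m) h0
    exact mono_of_mono f m

lemma claimD {M : Set A} (hM : IsMonobrick M) :
    ∀ n, ∀ X : A, SimpleIn (TT M) X → ∀ C ∈ chainC M n, ∀ m : X ⟶ C, Mono m →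
      ∃ Y ∈ M, subOrder X Y := by
  intro n
  induction n with
  | zero => intro X _ C hC m hm; exact ⟨C, hC, m, hm⟩
  | succ n ih =>
    have inner : ∀ Z : A, FiltMem (chainC M n) Z → ∀ X : A, SimpleIn (TT M) X →
        ∀ m : X ⟶ Z, Mono m → ∃ Y ∈ M, subOrder X Y := by
      intro Z hZ
      induction hZ with
      | @of_iso Z C hmem e =>
        intro X hX m hm
        haveI := hm
        haveI : Mono (m ≫ e.hom) := mono_comp _ _
        exact ih X hX C hmem (m ≫ e.hom) inferInstance
      | of_isZero hz =>
        intro X hX m hm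
        haveI := hm
        exact absurd (IsZero.of_mono_eq_zero m (hz.eq_zero_of_tgt m)) hX.1
      | @of_extension S hS h1 h3 ih1 ih3 =>
        intro X hX m hm
        haveI := hm
        haveI := hS.mono_f
        by_cases hq0 : m ≫ S.g = 0
        · obtain ⟨l, hl⟩ := KernelFork.IsLimit.lift' hS.fIsKernel m hq0
          have hl' : l ≫ S.f = m := hl
          haveI : Mono (l ≫ S.f) := by rw [hl']; exact hm
          haveI : Mono l := mono_of_mono l S.f
          exact ih1 X hX l inferInstance
        · have hses := shortExact_mono_cokernel (kernel.ι (m ≫ S.g))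
          have hcond : (kernel.ι (m ≫ S.g) ≫ m) ≫ S.g = 0 := by
            rw [Category.assoc, kernel.condition]
          obtain ⟨l, hl⟩ :=
            KernelFork.IsLimit.lift' hS.fIsKernel (kernel.ι (m ≫ S.g) ≫ m) hcond
          have hl' : l ≫ S.f = kernel.ι (m ≫ S.g) ≫ m := hl
          haveI : Mono (kernel.ι (m ≫ S.g) ≫ m) := mono_comp _ _
          haveI : Mono (l ≫ S.f) := by rw [hl']; infer_instance
          haveI : Mono l := mono_of_mono l S.f
          have hK : kernel (m ≫ S.g) ∈ TT M :=
            Set.mem_iUnion.2 ⟨n+1, ⟨S.X₁, h1, l, inferInstance⟩⟩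
          haveI := mono_factorThruCoimage (m ≫ S.g)
          have hI : Abelian.coimage (m ≫ S.g) ∈ TT M :=
            Set.mem_iUnion.2 ⟨n+1, ⟨S.X₃, h3, Abelian.factorThruCoimage (m ≫ S.g),
              inferInstance⟩⟩
          rcases hX.2 _ _ _ hses hK hI with hKz | hIz
          · have h6 : kernel.ι (m ≫ S.g) = 0 := hKz.eq_zero_of_src _
            haveI : Mono (m ≫ S.g) := Abelian.mono_of_kernel_ι_eq_zero _ h6
            exact ih3 X hX (m ≫ S.g) inferInstance
          · exfalso
            apply hq0
            have h0 : Abelian.factorThruCoimage (m ≫ S.g) = 0 := hIz.eq_zero_of_src _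
            rw [← Abelian.coimage.fac (m ≫ S.g), h0, comp_zero]
    intro X hX C hC m hm
    obtain ⟨Z, hZ, m2, hm2⟩ := hC
    haveI := hm; haveI := hm2
    haveI : Mono (m ≫ m2) := mono_comp _ _
    exact inner Z hZ X hX (m ≫ m2) inferInstance

lemma M_subset_simpTT {M : Set A} (hM : IsMonobrick M) : M ⊆ simpSet (TT M) := by
  intro Mi hMi
  refine ⟨Set.mem_iUnion.2 ⟨0, hMi⟩, (hM.2.1 Mi hMi).1, ?_⟩
  intro L Q i p w hS hL hQ
  by_contra hcon
  obtain ⟨hLz, hQz⟩ := not_or.mp hcon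
  haveI := hS.epi_g
  have hp0 : p ≠ 0 := fun h => hQz (IsZero.of_epi_eq_zero p h)
  obtain ⟨n, hQn⟩ := Set.mem_iUnion.1 hQ
  haveI := claimC hM n Q hQn Mi hMi p hp0
  haveI : IsIso p := isIso_of_mono_of_epi p
  apply hLz
  haveI := hS.mono_f
  refine IsZero.of_mono_eq_zero i ?_
  calc i = (i ≫ p) ≫ inv p := by rw [Category.assoc, IsIso.hom_inv_id, Category.comp_id]
  _ = 0 := by rw [w, zero_comp]

end Aux

theorem statement11 [∀ X : A, IsNoetherianObject X] [∀ X : A, IsArtinianObject X] :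
    (∀ M : Set A, IsMonobrick M → (IsTorsionFreeClass (Filt M) ↔ IsCofinallyClosed M)) ∧
    (∀ F : Set A, IsTorsionFreeClass F →
      IsCofinallyClosed (simpSet F) ∧ Filt (simpSet F) = F) ∧
    (∀ M : Set A, IsCofinallyClosed M → simpSet (Filt M) = M) := by
  have part3 : ∀ M : Set A, IsCofinallyClosed M → simpSet (Filt M) = M :=
    fun M hM => simpSet_filt_eq hM.1
  have part2 : ∀ F : Set A, IsTorsionFreeClass F →
      IsCofinallyClosed (simpSet F) ∧ Filt (simpSet F) = F := by
    intro F hF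
    refine ⟨simpSet_cofClosed hF, Set.eq_of_subset_of_subset ?_ ?_⟩
    · exact filt_subset_closed hF.1 hF.2.1 (fun X hX => hX.1)
    · intro X hX
      exact mem_filtSimp hF hX
  refine ⟨?_, part2, part3⟩
  intro M hM
  constructor
  · intro hTF
    have h := simpSet_cofClosed hTF
    rwa [simpSet_filt_eq hM] at h
  · intro hcc
    have hT : IsTorsionFreeClass (TT M) := TT_torsionFree
    have hcof : IsCofinalExt M (simpSet (TT M)) := by
      refine ⟨simpSet_monobrick hT, M_subset_simpTT hM, ?_⟩
      intro X hX
      obtain ⟨n, hXn⟩ := Set.mem_iUnion.1 hX.1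
      exact claimD hM n X hX.2 X hXn (𝟙 X) inferInstance
    have heq : simpSet (TT M) = M := hcc.2 _ hcof
    have h1 : Filt (simpSet (TT M)) = TT M :=
      Set.eq_of_subset_of_subset
        (filt_subset_closed hT.1 hT.2.1 (fun X hX => hX.1))
        (fun X hX => mem_filtSimp hT hX)
    rw [heq] at h1
    rw [h1]
    exact hT

end MonobrickPaper
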